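/- Let Σ' be a simplicial complex (a downward closed family of nonempty finsets) and let (σ, τ) be a reduction pair in Σ'. Then excising the pair does not modify the immediate boundary of any remaining simplex: for every ρ ∈ Σ' \ {σ, τ}, bd_{Σ' \ {σ, τ}}(ρ) = bd_{Σ'}(ρ). (Lemma 2: in a reduction-based algorithm, each removal operation does not modify the boundary of the remaining simplices.) -/

import Mathlib

open Finset

variable {α : Type*}

/-- `σ` is an immediate face of `τ`. -/
def ImmFace (σ τ : Finset α) : Prop :=
  σ ⊆ τ ∧ σ.card + 1 = τ.card

/-- A simplicial complex: a family of nonempty finsets closed under nonempty subsets. -/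
def IsComplex (S : Set (Finset α)) : Prop :=
  (∀ σ ∈ S, σ.Nonempty) ∧ ∀ τ ∈ S, ∀ σ : Finset α, σ ⊆ τ → σ.Nonempty → σ ∈ S

/-- Immediate boundary of `τ` in the family `S`. -/
def bd (S : Set (Finset α)) (τ : Finset α) : Set (Finset α) :=
  {σ ∈ S | ImmFace σ τ}

/-- Immediate coboundary of `σ` in the family `S`. -/
def cbd (S : Set (Finset α)) (σ : Finset α) : Set (Finset α) :=
  {τ ∈ S | ImmFace σ τ}

/-- `(σ, τ)` is a coreduction pair in `S`. -/
def CoredPair (S : Set (Finset α)) (σ τ : Finset α) : Prop :=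
  σ ∈ S ∧ τ ∈ S ∧ ImmFace σ τ ∧ bd S τ = {σ}

/-- `(σ, τ)` is a reduction pair in `S`. -/
def RedPair (S : Set (Finset α)) (σ τ : Finset α) : Prop :=
  σ ∈ S ∧ τ ∈ S ∧ ImmFace σ τ ∧ cbd S σ = {τ}

/-- `σ` is a free simplex in `S`. -/
def FreeSimplex (S : Set (Finset α)) (σ : Finset α) : Prop :=
  σ ∈ S ∧ bd S σ = ∅

/-- `σ` is a top simplex in `S`. -/
def TopSimplex (S : Set (Finset α)) (σ : Finset α) : Prop :=
  σ ∈ S ∧ cbd S σ = ∅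

/-- `S'` is an upward-closed subfamily of `S`. -/
def UpClosedIn (S S' : Set (Finset α)) : Prop :=
  S' ⊆ S ∧ ∀ σ ∈ S', ∀ τ ∈ S, σ ⊆ τ → τ ∈ S'

/-- An operation: removal of a pair of simplices, or of a single simplex. -/
abbrev Op (α : Type*) := (Finset α × Finset α) ⊕ Finset α

/-- Excise the simplices of an operation from a family. -/
def removeOp (S : Set (Finset α)) : Op α → Set (Finset α)
  | Sum.inl (σ, τ) => S \ {σ, τ}
  | Sum.inr σ => S \ {σ}

/-- Remaining family after performing a list of operations in order. -/
def remaining (S : Set (Finset α)) (L : List (Op α)) : Set (Finset α) :=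
  L.foldl removeOp S

/-- A coreduction-based removal sequence: every pair is a coreduction pair and
every single simplex is free, in the current remaining family. -/
def IsCoredSeq (S : Set (Finset α)) : List (Op α) → Prop
  | [] => True
  | o :: L =>
      (match o with
        | Sum.inl (σ, τ) => CoredPair S σ τ
        | Sum.inr σ => FreeSimplex S σ) ∧ IsCoredSeq (removeOp S o) L

/-- A reduction-based removal sequence: every pair is a reduction pair and
every single simplex is top, in the current remaining family. -/
def IsRedSeq (S : Set (Finset α)) : List (Op α) → Prop
  | [] => True
  | o :: L =>
      (match o with
        | Sum.inl (σ, τ) => RedPair S σ τ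
        | Sum.inr σ => TopSimplex S σ) ∧ IsRedSeq (removeOp S o) L

/-- A valid interleaved removal sequence: every pair is a coreduction or
reduction pair, and every single simplex is free or top, in the current
remaining family. -/
def IsInterSeq (S : Set (Finset α)) : List (Op α) → Prop
  | [] => True
  | o :: L =>
      (match o with
        | Sum.inl (σ, τ) => CoredPair S σ τ ∨ RedPair S σ τ
        | Sum.inr σ => FreeSimplex S σ ∨ TopSimplex S σ) ∧ IsInterSeq (removeOp S o) L

/-- A discrete vector field on `S`: pairs (face, immediate coface) of simplices of `S`,
each simplex of `S` belonging to at most one pair. -/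
def IsDVF (S : Set (Finset α)) (V : Set (Finset α × Finset α)) : Prop :=
  (∀ p ∈ V, p.1 ∈ S ∧ p.2 ∈ S ∧ ImmFace p.1 p.2) ∧
  ∀ σ ∈ S, ∀ p ∈ V, ∀ q ∈ V,
    (σ = p.1 ∨ σ = p.2) → (σ = q.1 ∨ σ = q.2) → p = q

/-- A `V`-path: a nonempty sequence of pairs of `V` such that each `σ_{i+1}` is an
immediate face of `τ_i` different from `σ_i`. -/
def IsVPath (V : Set (Finset α × Finset α)) (P : List (Finset α × Finset α)) : Prop :=
  P ≠ [] ∧ (∀ p ∈ P, p ∈ V) ∧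
  P.Chain' (fun p q => ImmFace q.1 p.2 ∧ q.1 ≠ p.1)

/-- A closed `V`-path: `σ_1` is an immediate face of `τ_r` different from `σ_r`. -/
def IsClosedVPath (V : Set (Finset α × Finset α))
    (P : List (Finset α × Finset α)) : Prop :=
  ∃ hne : P ≠ [], IsVPath V P ∧
    ImmFace (P.head hne).1 (P.getLast hne).2 ∧
    (P.head hne).1 ≠ (P.getLast hne).1

/-- The lower star of a vertex `v` with respect to a vertex function `F`. -/
def lowerStar (S : Set (Finset α)) (F : α → ℝ) (v : α) : Set (Finset α) :=
  {σ ∈ S | v ∈ σ ∧ ∀ w ∈ σ, F v ≤ F w}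

/-!
Removing `σ` and `τ` can only shrink the boundary of `ρ` by `σ` or `τ` themselves. Since `τ` is
the only coface of `σ`, `σ` is not a face of `ρ ≠ τ`. And `τ` is a top simplex: a coface `ρ` of `τ`
would contain `σ` together with a vertex `x ∉ τ`, making `insert x σ` a second coface of `σ`.
-/

theorem bd_sdiff (S T : Set (Finset α)) (ρ : Finset α) : bd (S \ T) ρ = bd S ρ \ T := by
  ext π
  simp only [bd, Set.mem_sdiff, Set.mem_ofPred_eq]
  tauto

theorem ImmFace.exists_immFace_ne_of_immFace {σ τ ρ : Finset α} (hστ : ImmFace σ τ)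
    (hτρ : ImmFace τ ρ) : ∃ μ ⊆ ρ, ImmFace σ μ ∧ μ ≠ τ := by
  classical
  obtain ⟨x, hxρ, hxτ⟩ : ∃ x ∈ ρ, x ∉ τ :=
    exists_of_ssubset (ssubset_of_subset_of_ne hτρ.1 (by rintro rfl; have := hτρ.2; omega))
  have hxσ : x ∉ σ := fun hx => hxτ (hστ.1 hx)
  refine ⟨insert x σ, insert_subset hxρ (hστ.1.trans hτρ.1),
    ⟨subset_insert x σ, (card_insert_of_notMem hxσ).symm⟩, ?_⟩
  rintro rfl
  exact hxτ (mem_insert_self x σ)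

theorem RedPair.topSimplex_snd {S : Set (Finset α)} (hS : IsComplex S) {σ τ : Finset α}
    (h : RedPair S σ τ) : TopSimplex S τ := by
  obtain ⟨-, hτ, hστ, hcbd⟩ := h
  refine ⟨hτ, Set.eq_empty_of_forall_notMem fun ρ ⟨hρ, hτρ⟩ => ?_⟩
  obtain ⟨μ, hμρ, hσμ, hμτ⟩ := hστ.exists_immFace_ne_of_immFace hτρ
  have hμ : μ ∈ cbd S σ :=
    ⟨hS.2 ρ hρ μ hμρ (card_pos.mp (by have := hσμ.2; omega)), hσμ⟩
  exact hμτ (by simpa [hcbd] using hμ)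

theorem reduction_preserves_boundary_general {α : Type*}
    (S' : Set (Finset α)) (hS' : IsComplex S')
    (σ τ : Finset α) (h : RedPair S' σ τ) :
    ∀ ρ ∈ S' \ {σ, τ}, bd (S' \ {σ, τ}) ρ = bd S' ρ := by
  rintro ρ ⟨hρ, hρστ⟩
  rw [bd_sdiff, sdiff_eq_left, Set.disjoint_insert_right, Set.disjoint_singleton_right]
  constructor
  · rintro ⟨-, hσρ⟩
    have hρ_cbd : ρ ∈ cbd S' σ := ⟨hρ, hσρ⟩
    rw [h.2.2.2] at hρ_cbd
    exact hρστ (Or.inr hρ_cbd)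
  · rintro ⟨-, hτρ⟩
    exact (h.topSimplex_snd hS').2.subset ⟨hρ, hτρ⟩

/-- Lemma 2: excising a reduction pair from a simplicial complex does not modify
the immediate boundary of any remaining simplex. -/
theorem reduction_preserves_boundary {α : Type*} [DecidableEq α]
    (S' : Set (Finset α)) (hS' : IsComplex S')
    (σ τ : Finset α) (h : RedPair S' σ τ) :
    ∀ ρ ∈ S' \ {σ, τ}, bd (S' \ {σ, τ}) ρ = bd S' ρ :=
  reduction_preserves_boundary_general S' hS' σ τ h
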